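/- arXiv:2112.08622 — 3 statements merged into one kernel-verified Lean document; each statement's English description precedes it below -/
import Mathlib

section
/- Let (Ω, q) be a finitely additive probability space and let a_i, b_i (i = 1,...,n) be events with conditional betting quotients satisfying q(a_i ∧ b_i) = q(a_i|b_i)·q(b_i). For any stakes S_1,...,S_n ∈ ℝ, define the payoff G(ω) = Σ_{i: ω ∈ a_i ∧ b_i} (1 - q(a_i|b_i))S_i - Σ_{i: ω ∈ (¬a_i) ∧ b_i} q(a_i|b_i)S_i. Then the expected payoff Σ_ω q(ω)G(ω) equals 0; in particular, it is not the case that G(ω) < 0 for all ω with q(ω) > 0. -/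
/-- Converse Dutch book argument: if the betting quotients satisfy the
multiplication law of a (finitely additive) probability, then the expected
payoff of any system of conditional bets vanishes, so the bettor does not
lose on every outcome of positive probability. -/
theorem converse_dutch_book
    {Ω : Type*} [Fintype Ω] [DecidableEq Ω]
    (q : Ω → ℝ) (hq0 : ∀ ω, 0 ≤ q ω) (hq1 : ∑ ω, q ω = 1)
    (n : ℕ) (a b : Fin n → Finset Ω) (qc : Fin n → ℝ)
    (hmul : ∀ i, ∑ ω ∈ a i ∩ b i, q ω = qc i * ∑ ω ∈ b i, q ω)
    (S : Fin n → ℝ)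
    (G : Ω → ℝ)
    (hG : ∀ ω, G ω =
      (∑ i ∈ Finset.univ.filter (fun i => ω ∈ a i ∧ ω ∈ b i), (1 - qc i) * S i)
      - ∑ i ∈ Finset.univ.filter (fun i => ω ∉ a i ∧ ω ∈ b i), qc i * S i) :
    (∑ ω, q ω * G ω = 0) ∧ ¬ (∀ ω, 0 < q ω → G ω < 0) := by
  have key : ∑ ω, q ω * G ω = 0 := by
    have step : ∀ ω, q ω * G ω =
        (∑ i, (if ω ∈ a i ∧ ω ∈ b i then (1 - qc i) * S i * q ω else 0))
        - ∑ i, (if ω ∉ a i ∧ ω ∈ b i then qc i * S i * q ω else 0) := by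
      intro ω
      rw [hG ω, mul_sub]
      congr 1 <;>
      · rw [Finset.mul_sum, Finset.sum_filter]
        refine Finset.sum_congr rfl fun i _ => ?_
        split <;> ring
    calc ∑ ω, q ω * G ω
        = ∑ ω, ((∑ i, (if ω ∈ a i ∧ ω ∈ b i then (1 - qc i) * S i * q ω else 0))
          - ∑ i, (if ω ∉ a i ∧ ω ∈ b i then qc i * S i * q ω else 0)) := by
          exact Finset.sum_congr rfl fun ω _ => step ω
      _ = (∑ i, ∑ ω, (if ω ∈ a i ∧ ω ∈ b i then (1 - qc i) * S i * q ω else 0))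
          - ∑ i, ∑ ω, (if ω ∉ a i ∧ ω ∈ b i then qc i * S i * q ω else 0) := by
          rw [Finset.sum_sub_distrib]
          congr 1 <;> exact Finset.sum_comm
      _ = (∑ i, (1 - qc i) * S i * ∑ ω ∈ a i ∩ b i, q ω)
          - ∑ i, qc i * S i * ∑ ω ∈ (b i) \ (a i), q ω := by
          congr 1 <;> refine Finset.sum_congr rfl fun i _ => ?_
          · rw [Finset.mul_sum, ← Finset.sum_filter]
            congr 1
            ext ω
            simp [Finset.mem_inter, and_comm]
          · rw [Finset.mul_sum, ← Finset.sum_filter]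
            congr 1
            ext ω
            simp [Finset.mem_sdiff, and_comm]
      _ = 0 := by
          rw [← Finset.sum_sub_distrib]
          refine Finset.sum_eq_zero fun i _ => ?_
          have hsd : ∑ ω ∈ (b i) \ (a i), q ω
              = (∑ ω ∈ b i, q ω) - ∑ ω ∈ a i ∩ b i, q ω := by
            rw [← Finset.sdiff_inter_self_left,
              Finset.sum_sdiff_eq_sub Finset.inter_subset_left,
              Finset.inter_comm]
          rw [hsd, hmul i]
          ring
  refine ⟨key, fun h => ?_⟩
  have hpos : ∃ ω, 0 < q ω := by
    by_contra hc
    push_neg at hc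
    have : ∀ ω, q ω = 0 := fun ω => le_antisymm (hc ω) (hq0 ω)
    simp [this] at hq1
  obtain ⟨ω₀, hω₀⟩ := hpos
  have hlt : ∑ ω, q ω * G ω < 0 := by
    have := Finset.sum_lt_sum (s := (Finset.univ : Finset Ω))
      (f := fun ω => q ω * G ω) (g := fun _ => (0:ℝ))
      (fun ω _ => by
        rcases lt_or_eq_of_le (hq0 ω) with hp | hz
        · exact le_of_lt (mul_neg_of_pos_of_neg hp (h ω hp))
        · simp [← hz])
      ⟨ω₀, Finset.mem_univ ω₀, mul_neg_of_pos_of_neg hω₀ (h ω₀ hω₀)⟩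
    simpa using this
  exact absurd key (ne_of_lt hlt)
end

section
/- For natural numbers n, k, j, l with j ≤ k and l ≤ n-k, the identity C(k,j)·C(n-k,l)·B(n-j-l+1, j+l+1) = C(j+l,j)·C(n-j-l,k-j)·B(n-k+1, k+1) holds, where C denotes the binomial coefficient and B the Beta function. -/
lemma fact_prod_aux (a b : ℕ) :
    a.factorial * ∏ j ∈ Finset.range (b + 1), (a + 1 + j) = (a + b + 1).factorial := by
  induction b with
  | zero => simp [Nat.factorial_succ, Nat.mul_comm]
  | succ b ih =>
      rw [Finset.prod_range_succ, ← mul_assoc, ih]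
      have h2 : a + (b + 1) + 1 = (a + b + 1) + 1 := by omega
      rw [h2, Nat.factorial_succ (a + b + 1)]
      ring

lemma beta_nat (a b : ℕ) :
    ∫ x in (0:ℝ)..1, x ^ a * (1 - x) ^ b
      = (a.factorial * b.factorial : ℝ) / (a + b + 1).factorial := by
  have hu : 0 < Complex.re ((a : ℂ) + 1) := by simp; positivity
  have h := Complex.betaIntegral_eval_nat_add_one_right hu b
  rw [Complex.betaIntegral] at h
  have hint : (∫ x in (0:ℝ)..1, (x:ℂ) ^ ((a:ℂ) + 1 - 1) * ((1:ℂ) - x) ^ (((b:ℂ) + 1) - 1))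
      = ((∫ x in (0:ℝ)..1, x ^ a * (1 - x) ^ b : ℝ) : ℂ) := by
    rw [← intervalIntegral.integral_ofReal]
    apply intervalIntegral.integral_congr
    intro x _
    push_cast
    rw [add_sub_cancel_right, add_sub_cancel_right, Complex.cpow_natCast, Complex.cpow_natCast]
  rw [hint] at h
  have hprod : (∏ j ∈ Finset.range (b + 1), ((a:ℂ) + 1 + j))
      = ((a + b + 1).factorial : ℂ) / (a.factorial : ℂ) := by
    rw [eq_div_iff (by exact_mod_cast a.factorial_ne_zero), mul_comm]
    exact_mod_cast congrArg (fun x : ℕ => (x : ℂ)) (fact_prod_aux a b)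
  rw [hprod] at h
  have : ((∫ x in (0:ℝ)..1, x ^ a * (1 - x) ^ b : ℝ) : ℂ)
      = ((a.factorial * b.factorial : ℝ) / (a + b + 1).factorial : ℝ) := by
    rw [h]
    push_cast
    rw [div_div_eq_mul_div]
    ring_nf
  exact_mod_cast this

lemma key_fact (a b c d : ℕ) :
    (a + b).choose a * (c + d).choose c * ((b + d).factorial * (a + c).factorial)
      = (a + c).choose a * (b + d).choose b * ((c + d).factorial * (a + b).factorial) := by
  have h : ((a + b).choose a * (c + d).choose c * ((b + d).factorial * (a + c).factorial) : ℚ)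
      = ((a + c).choose a * (b + d).choose b * ((c + d).factorial * (a + b).factorial) : ℚ) := by
    rw [Nat.cast_choose ℚ (Nat.le_add_right a b), Nat.cast_choose ℚ (Nat.le_add_right c d),
      Nat.cast_choose ℚ (Nat.le_add_right a c), Nat.cast_choose ℚ (Nat.le_add_right b d)]
    simp only [Nat.add_sub_cancel_left]
    have h1 := a.factorial_ne_zero
    have h2 := b.factorial_ne_zero
    have h3 := c.factorial_ne_zero
    have h4 := d.factorial_ne_zero
    field_simp
  exact_mod_cast h



/-- Binomial–Beta identity: C(k,j)·C(n-k,l)·B(n-j-l+1, j+l+1)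
  = C(j+l,j)·C(n-j-l,k-j)·B(n-k+1, k+1). -/
theorem binomial_beta_identity (n k j l : ℕ)
    (hk : k ≤ n) (hj : j ≤ k) (hl : l ≤ n - k) :
    (k.choose j * (n - k).choose l : ℝ) *
        ∫ p in (0:ℝ)..1, p ^ (n - j - l) * (1 - p) ^ (j + l) =
      ((j + l).choose j * (n - j - l).choose (k - j) : ℝ) *
        ∫ p in (0:ℝ)..1, p ^ (n - k) * (1 - p) ^ k := by
  obtain ⟨b, hb⟩ : ∃ b, k = j + b := ⟨k - j, by omega⟩
  obtain ⟨d, hd⟩ : ∃ d, n - k = l + d := ⟨n - k - l, by omega⟩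
  have e1 : n - j - l = b + d := by omega
  have e4 : k - j = b := by omega
  rw [beta_nat, beta_nat, e1, e4, hd]
  have e2 : b + d + (j + l) + 1 = n + 1 := by omega
  have e3 : l + d + k + 1 = n + 1 := by omega
  rw [e2, e3, hb]
  have hkey := key_fact j b l d
  have hkey' : ((j + b).choose j * (l + d).choose l * ((b + d).factorial * (j + l).factorial) : ℝ)
      = ((j + l).choose j * (b + d).choose b * ((l + d).factorial * (j + b).factorial) : ℝ) := by
    exact_mod_cast congrArg (fun x : ℕ => (x : ℝ)) hkey
  have hne : ((n + 1).factorial : ℝ) ≠ 0 := by exact_mod_cast (n + 1).factorial_ne_zero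
  field_simp
  linear_combination hkey'
end

section
/- Let μ be a probability measure on the set of density operators on ℂ^N, let ρ_{n+1} = ∫ ρ^{⊗(n+1)} dμ(ρ), and let P be a projector with Π_{n,k} defined as the symmetrized sum of k-out-of-n orderings of P and 𝟙-P. If tr(ρ_{n+1}(𝟙 ⊗ Π_{n,k})) ≠ 0, then tr(ρ_{n+1}(P ⊗ Π_{n,k}))/tr(ρ_{n+1}(𝟙 ⊗ Π_{n,k})) = q(P_{n+1,k+1})/q(P_{n,k}), where q(P_{m,j}) = ∫ tr(ρP)^j(1 - tr(ρP))^{m-j} dμ(ρ). -/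
open MeasureTheory ComplexOrder

/-- The n-fold tensor (Kronecker) power of a matrix, indexed by tuples. -/
def tensorPow {N : ℕ} (M : Matrix (Fin N) (Fin N) ℂ) (n : ℕ) :
    Matrix (Fin n → Fin N) (Fin n → Fin N) ℂ :=
  Matrix.of fun x y => ∏ i, M (x i) (y i)

/-- The projector placing P in the factors of s and 𝟙 - P elsewhere. -/
def placedProj {N : ℕ} (P : Matrix (Fin N) (Fin N) ℂ) (n : ℕ)
    (s : Finset (Fin n)) : Matrix (Fin n → Fin N) (Fin n → Fin N) ℂ :=
  Matrix.of fun x y => ∏ i, (if i ∈ s then P else 1 - P) (x i) (y i)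

/-- The symmetrized k-out-of-n projector Π_{n,k}. -/
noncomputable def symProj {N : ℕ} (P : Matrix (Fin N) (Fin N) ℂ) (n k : ℕ) :
    Matrix (Fin n → Fin N) (Fin n → Fin N) ℂ :=
  ∑ s ∈ Finset.univ.powersetCard k, placedProj P n s

/-- The Kronecker product A ⊗ B of a single-site matrix with an n-site one. -/
def siteProd {N n : ℕ} (A : Matrix (Fin N) (Fin N) ℂ)
    (B : Matrix (Fin n → Fin N) (Fin n → Fin N) ℂ) :
    Matrix (Fin (n + 1) → Fin N) (Fin (n + 1) → Fin N) ℂ :=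
  Matrix.of fun x y => A (x 0) (y 0) * B (Fin.tail x) (Fin.tail y)

/-- Matrices over ℂ carry the product (Borel) σ-algebra. -/
noncomputable instance matrixMeasurableSpace {N : ℕ} :
    MeasurableSpace (Matrix (Fin N) (Fin N) ℂ) :=
  (inferInstance : MeasurableSpace (Fin N → Fin N → ℂ))

/-! Both traces are linear in `ρ_{n+1}`, hence integrals over `μ` of the same traces taken
against `ρ^{⊗(n+1)}`. Against a product state each placed projector factorises,
`tr(ρ^{⊗(n+1)} (A ⊗ P^{⊗s} ⊗ (𝟙-P)^{⊗sᶜ})) = tr(ρA) tr(ρP)^|s| tr(ρ(𝟙-P))^(n-|s|)`,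
so `Π_{n,k}` contributes `C(n,k)` equal terms. With `tr ρ = 1` the numerator becomes
`C(n,k) q(P_{n+1,k+1})` and the denominator `C(n,k) q(P_{n,k})`; the binomial factor cancels,
being nonzero because the denominator is. -/

def piKron {N m : ℕ} (Q : Fin m → Matrix (Fin N) (Fin N) ℂ) :
    Matrix (Fin m → Fin N) (Fin m → Fin N) ℂ :=
  Matrix.of fun x y => ∏ i, Q i (x i) (y i)

lemma tensorPow_eq_piKron {N : ℕ} (ρ : Matrix (Fin N) (Fin N) ℂ) (m : ℕ) :
    tensorPow ρ m = piKron fun _ => ρ := rfl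

lemma placedProj_eq_piKron {N n : ℕ} (P : Matrix (Fin N) (Fin N) ℂ) (s : Finset (Fin n)) :
    placedProj P n s = piKron fun i => if i ∈ s then P else 1 - P := rfl

lemma siteProd_piKron {N n : ℕ} (A : Matrix (Fin N) (Fin N) ℂ)
    (Q : Fin n → Matrix (Fin N) (Fin N) ℂ) :
    siteProd A (piKron Q) = piKron (Fin.cons A Q) := by
  ext x y
  simp [siteProd, piKron, Fin.prod_univ_succ, Fin.tail]

lemma siteProd_sum {N n : ℕ} {ι : Type*} (A : Matrix (Fin N) (Fin N) ℂ) (t : Finset ι)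
    (B : ι → Matrix (Fin n → Fin N) (Fin n → Fin N) ℂ) :
    siteProd A (∑ i ∈ t, B i) = ∑ i ∈ t, siteProd A (B i) := by
  ext x y
  simp [siteProd, Matrix.sum_apply, Finset.mul_sum]

lemma trace_piKron_mul_piKron {N m : ℕ} (Q R : Fin m → Matrix (Fin N) (Fin N) ℂ) :
    (piKron Q * piKron R).trace = ∏ i, (Q i * R i).trace := by
  have trace_eq_sum_pairs : ∀ i, (Q i * R i).trace
      = ∑ p : Fin N × Fin N, Q i p.1 p.2 * R i p.2 p.1 := by
    intro i
    rw [Fintype.sum_prod_type]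
    simp only [Matrix.trace, Matrix.diag, Matrix.mul_apply]
  simp only [trace_eq_sum_pairs, Fintype.prod_sum]
  -- a choice of one pair `(x i, y i)` per site is the same as a pair of tuples `(x, y)`
  rw [← (Equiv.arrowProdEquivProdArrow (Fin m) (fun _ => Fin N) (fun _ => Fin N)).symm.sum_comp]
  simp only [Matrix.trace, Matrix.diag, Matrix.mul_apply, piKron, Matrix.of_apply,
    ← Finset.prod_mul_distrib, ← Fintype.sum_prod_type']
  rfl

lemma Finset.prod_ite_mem_const {ι M : Type*} [Fintype ι] [DecidableEq ι] [CommMonoid M] (s : Finset ι)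
    (a b : M) :
    ∏ i, (if i ∈ s then a else b) = a ^ s.card * b ^ (Fintype.card ι - s.card) := by
  rw [Finset.prod_ite, Finset.prod_const, Finset.prod_const, Finset.filter_mem_eq_inter,
    Finset.univ_inter, Finset.filter_not, Finset.filter_mem_eq_inter, Finset.univ_inter,
    ← Finset.compl_eq_univ_sdiff, Finset.card_compl]

lemma trace_tensorPow_mul_siteProd_placedProj {N n : ℕ} (ρ A P : Matrix (Fin N) (Fin N) ℂ)
    (s : Finset (Fin n)) :
    (tensorPow ρ (n + 1) * siteProd A (placedProj P n s)).trace
      = (ρ * A).trace * ((ρ * P).trace ^ s.card * (ρ * (1 - P)).trace ^ (n - s.card)) := by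
  rw [tensorPow_eq_piKron, placedProj_eq_piKron, siteProd_piKron, trace_piKron_mul_piKron,
    Fin.prod_univ_succ]
  simp only [Fin.cons_succ, Fin.cons_zero, mul_ite, apply_ite Matrix.trace]
  rw [Finset.prod_ite_mem_const, Fintype.card_fin]

lemma trace_tensorPow_mul_siteProd_symProj {N : ℕ} (ρ A P : Matrix (Fin N) (Fin N) ℂ)
    (n k : ℕ) :
    (tensorPow ρ (n + 1) * siteProd A (symProj P n k)).trace
      = n.choose k * ((ρ * A).trace * ((ρ * P).trace ^ k * (ρ * (1 - P)).trace ^ (n - k))) := by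
  rw [symProj, siteProd_sum, Matrix.mul_sum, Matrix.trace_sum,
    Finset.sum_congr rfl fun s hs => by
      rw [trace_tensorPow_mul_siteProd_placedProj, (Finset.mem_powersetCard_univ.mp hs)],
    Finset.sum_const, Finset.card_powersetCard, Finset.card_univ, Fintype.card_fin,
    nsmul_eq_mul]

lemma Matrix.trace_mul_eq_integral {α ι : Type*} [Fintype ι] [MeasurableSpace α]
    {μ : Measure α} {f : α → Matrix ι ι ℂ} (hf : ∀ i j, Integrable (fun a => f a i j) μ)
    {R : Matrix ι ι ℂ} (hR : ∀ i j, R i j = ∫ a, f a i j ∂μ) (M : Matrix ι ι ℂ) :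
    (R * M).trace = ∫ a, (f a * M).trace ∂μ := by
  simp only [Matrix.trace, Matrix.diag, Matrix.mul_apply, hR, ← integral_mul_const]
  rw [integral_finsetSum _ fun i _ => integrable_finsetSum _ fun j _ => (hf i j).mul_const _]
  refine Finset.sum_congr rfl fun i _ => ?_
  rw [integral_finsetSum _ fun j _ => (hf i j).mul_const _]

theorem quantum_predictive_ratio_general {N : ℕ} (n k : ℕ)
    (μ : Measure (Matrix (Fin N) (Fin N) ℂ))
    (hdensity : ∀ᵐ ρ ∂μ, ρ.PosSemidef ∧ ρ.trace = 1)
    (hint : ∀ (m : ℕ) (x y : Fin m → Fin N),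
      Integrable (fun ρ => tensorPow ρ m x y) μ)
    (P : Matrix (Fin N) (Fin N) ℂ)
    (ρn1 : Matrix (Fin (n + 1) → Fin N) (Fin (n + 1) → Fin N) ℂ)
    (hρn1 : ∀ x y, ρn1 x y = ∫ ρ, tensorPow ρ (n + 1) x y ∂μ)
    (q : ℕ → ℕ → ℂ)
    (hq : ∀ m j, q m j =
      ∫ ρ, (ρ * P).trace ^ j * (1 - (ρ * P).trace) ^ (m - j) ∂μ)
    (htr : (ρn1 * siteProd 1 (symProj P n k)).trace ≠ 0) :
    (ρn1 * siteProd P (symProj P n k)).trace /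
        (ρn1 * siteProd 1 (symProj P n k)).trace =
      q (n + 1) (k + 1) / q n k := by
  have hmix : ∀ A, (ρn1 * siteProd A (symProj P n k)).trace = n.choose k *
      ∫ ρ, (ρ * A).trace * ((ρ * P).trace ^ k * (ρ * (1 - P)).trace ^ (n - k)) ∂μ := by
    intro A
    simp_rw [Matrix.trace_mul_eq_integral (hint (n + 1)) hρn1,
      trace_tensorPow_mul_siteProd_symProj, integral_const_mul]
  have htrace : ∀ᵐ ρ ∂μ, (ρ * 1).trace = 1 ∧ (ρ * (1 - P)).trace = 1 - (ρ * P).trace := by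
    filter_upwards [hdensity] with ρ hρ
    rw [mul_one, Matrix.mul_sub, mul_one, Matrix.trace_sub, hρ.2]
    exact ⟨rfl, rfl⟩
  have hnum : (ρn1 * siteProd P (symProj P n k)).trace = n.choose k * q (n + 1) (k + 1) := by
    rw [hmix, hq, Nat.succ_sub_succ]
    congr 1
    refine integral_congr_ae ?_
    filter_upwards [htrace] with ρ hρ
    rw [hρ.2]
    ring
  have hden : (ρn1 * siteProd 1 (symProj P n k)).trace = n.choose k * q n k := by
    rw [hmix, hq]
    congr 1
    refine integral_congr_ae ?_
    filter_upwards [htrace] with ρ hρ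
    rw [hρ.1, hρ.2, one_mul]
  rw [hnum, hden]
  exact mul_div_mul_left _ _ (left_ne_zero_of_mul (hden ▸ htr))

/-- Quantum Laplace-law ratio: for an exchangeable de Finetti state
ρ_{n+1} = ∫ ρ^{⊗(n+1)} dμ(ρ), the predictive conditional probability equals
the ratio q(P_{n+1,k+1})/q(P_{n,k}) of mixture probabilities. -/
theorem quantum_predictive_ratio {N : ℕ} (n k : ℕ) (hk : k ≤ n)
    (μ : Measure (Matrix (Fin N) (Fin N) ℂ)) [IsProbabilityMeasure μ]
    (hdensity : ∀ᵐ ρ ∂μ, ρ.PosSemidef ∧ ρ.trace = 1)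
    (hint : ∀ (m : ℕ) (x y : Fin m → Fin N),
      Integrable (fun ρ => tensorPow ρ m x y) μ)
    (P : Matrix (Fin N) (Fin N) ℂ) (hP : P.IsHermitian) (hP2 : P * P = P)
    (ρn1 : Matrix (Fin (n + 1) → Fin N) (Fin (n + 1) → Fin N) ℂ)
    (hρn1 : ∀ x y, ρn1 x y = ∫ ρ, tensorPow ρ (n + 1) x y ∂μ)
    (q : ℕ → ℕ → ℂ)
    (hq : ∀ m j, q m j =
      ∫ ρ, (ρ * P).trace ^ j * (1 - (ρ * P).trace) ^ (m - j) ∂μ)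
    (htr : (ρn1 * siteProd 1 (symProj P n k)).trace ≠ 0) :
    (ρn1 * siteProd P (symProj P n k)).trace /
        (ρn1 * siteProd 1 (symProj P n k)).trace =
      q (n + 1) (k + 1) / q n k :=
  quantum_predictive_ratio_general n k μ hdensity hint P ρn1 hρn1 q hq htr
end
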